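/- arXiv:2208.05642 — 3 statements merged into one kernel-verified Lean document; each statement's English description precedes it below -/
import Mathlib

section
/- Let ρ ≥ 1 and define r₁ = log ρ + log(log(ρ + (e − 1))). Then k(r₁) ≥ 0, where k(r) = (1 + ρ)r − (e^r − 1) − ρ(1 − e^{−r}). Equivalently, (ρ+1)(log ρ + log log(ρ + e − 1)) − ρ(log(ρ + e − 1) + 1) + 1/log(ρ + e − 1) + 1 ≥ 0. -/
/-!
Put x = log (ρ + e - 1) ≥ 1, so that ρ = eˣ - (e - 1) and r₁ = log ρ + log x; then k(r₁) becomes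
F x = (1 + ρ)(log ρ + log x) + 1 + 1/x - ρ(x + 1). The function F and its first two derivatives
vanish at x = 1, so it suffices that F‴ ≥ 0 on [1, ∞). Writing log ρ - x = -log (1 + (e - 1)/ρ),
bounding that logarithm by its cubic Taylor polynomial and using log x ≥ 1 - 1/x bounds F‴ below by
an algebraic expression in 1/x and ρ. This is termwise nonnegative for x ≥ 3/2; for x ≤ 3/2 the
estimate (2 - x)eˣ ≤ e, i.e. e^(1-x) ≥ 2 - x, bounds ρ in terms of x and leaves a polynomial
inequality in 1/x.
-/

open Real Set

theorem monotoneOn_Ici_of_hasDerivAt_nonneg {f f' : ℝ → ℝ} {a : ℝ}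
    (hf : ∀ x ∈ Ici a, HasDerivAt f (f' x) x) (hf' : ∀ x ∈ Ici a, 0 ≤ f' x) :
    MonotoneOn f (Ici a) :=
  monotoneOn_of_hasDerivWithinAt_nonneg (convex_Ici a)
    (fun x hx => (hf x hx).continuousAt.continuousWithinAt)
    (fun x hx => (hf x (interior_subset hx)).hasDerivWithinAt)
    (fun x hx => hf' x (interior_subset hx))

theorem Real.log_one_add_le_cubic {t : ℝ} (ht : 0 ≤ t) :
    log (1 + t) ≤ t - t ^ 2 / 2 + t ^ 3 / 3 := by
  have hderiv : ∀ y ∈ Ici (0 : ℝ), HasDerivAt (fun y => y - y ^ 2 / 2 + y ^ 3 / 3 - log (1 + y))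
      (y ^ 3 / (1 + y)) y := by
    intro y hy
    have hy : (0 : ℝ) < 1 + y := by simp only [mem_Ici] at hy; linarith
    refine ((((hasDerivAt_id' y).sub ((hasDerivAt_pow 2 y).div_const 2)).add
      ((hasDerivAt_pow 3 y).div_const 3)).sub
        (((hasDerivAt_id' y).const_add 1).log hy.ne')).congr_deriv ?_
    field_simp
    ring
  have := monotoneOn_Ici_of_hasDerivAt_nonneg hderiv
    (fun y hy => by simp only [mem_Ici] at hy; positivity) self_mem_Ici ht ht
  norm_num at this
  linarith

namespace KAtR1

noncomputable def c : ℝ := exp 1 - 1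

noncomputable def ρ (x : ℝ) : ℝ := exp x - c

noncomputable def Λ (x : ℝ) : ℝ := log (ρ x) + log x - x

noncomputable def F (x : ℝ) : ℝ := (1 + ρ x) * (Λ x + x) + 1 + 1 / x - ρ x * (x + 1)

noncomputable def F₁ (x : ℝ) : ℝ :=
  exp x * Λ x + 1 + c / ρ x + (1 + ρ x) / x - 1 / x ^ 2 - ρ x

noncomputable def F₂ (x : ℝ) : ℝ :=
  exp x * (Λ x + 2 / x + c / ρ x - c / ρ x ^ 2 - 1) - (1 + ρ x) / x ^ 2 + 2 / x ^ 3

noncomputable def F₃ (x : ℝ) : ℝ :=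
  exp x * (Λ x - 1 + 3 / x - 3 / x ^ 2 + c / ρ x + (c - c ^ 2) / ρ x ^ 2 + 2 * c ^ 2 / ρ x ^ 3)
    + 2 * (1 + ρ x) / x ^ 3 - 6 / x ^ 4

theorem c_gt : 1.718 < c := by
  rw [c]; linarith [exp_one_gt_d9]

theorem c_lt : c < 1.7183 := by
  rw [c]; linarith [exp_one_lt_d9]

theorem exp_eq_ρ_add (x : ℝ) : exp x = ρ x + c := by
  rw [ρ]; ring

theorem ρ_one : ρ 1 = 1 := by
  rw [ρ, c]; ring

theorem one_le_ρ {x : ℝ} (hx : 1 ≤ x) : 1 ≤ ρ x := by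
  rw [← ρ_one, ρ, ρ]; gcongr

theorem hasDerivAt_ρ (x : ℝ) : HasDerivAt ρ (exp x) x :=
  (hasDerivAt_exp x).sub_const c

theorem hasDerivAt_Λ {x : ℝ} (hx : x ≠ 0) (hρ : ρ x ≠ 0) :
    HasDerivAt Λ (c / ρ x + 1 / x) x := by
  refine ((((hasDerivAt_ρ x).log hρ).add (hasDerivAt_log hx)).sub (hasDerivAt_id' x)).congr_deriv ?_
  rw [exp_eq_ρ_add]
  field_simp
  ring

theorem hasDerivAt_F {x : ℝ} (hx : x ≠ 0) (hρ : ρ x ≠ 0) : HasDerivAt F (F₁ x) x := by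
  have hρ' := hasDerivAt_ρ x
  refine (((((hρ'.const_add 1).mul ((hasDerivAt_Λ hx hρ).add (hasDerivAt_id' x))).add_const 1).add
    ((hasDerivAt_const x 1).div (hasDerivAt_id' x) hx)).sub
    (hρ'.mul ((hasDerivAt_id' x).add_const 1))).congr_deriv ?_
  rw [F₁, exp_eq_ρ_add]
  simp only [Pi.add_apply]
  field_simp
  ring

theorem hasDerivAt_F₁ {x : ℝ} (hx : x ≠ 0) (hρ : ρ x ≠ 0) : HasDerivAt F₁ (F₂ x) x := by
  have hρ' := hasDerivAt_ρ x
  have hx' := hasDerivAt_id' x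
  refine ((((((hasDerivAt_exp x).mul (hasDerivAt_Λ hx hρ)).add_const 1).add
    ((hasDerivAt_const x c).div hρ' hρ)).add ((hρ'.const_add 1).div hx' hx)).sub
    ((hasDerivAt_const x 1).div (hx'.pow 2) (pow_ne_zero 2 hx))).sub hρ' |>.congr_deriv ?_
  rw [F₂, exp_eq_ρ_add]
  simp only [Pi.pow_apply]
  field_simp
  ring

theorem hasDerivAt_F₂ {x : ℝ} (hx : x ≠ 0) (hρ : ρ x ≠ 0) : HasDerivAt F₂ (F₃ x) x := by
  have hρ' := hasDerivAt_ρ x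
  have hx' := hasDerivAt_id' x
  refine (((hasDerivAt_exp x).mul (((((hasDerivAt_Λ hx hρ).add
    ((hasDerivAt_const x 2).div hx' hx)).add ((hasDerivAt_const x c).div hρ' hρ)).sub
    ((hasDerivAt_const x c).div (hρ'.pow 2) (pow_ne_zero 2 hρ))).sub_const 1)).sub
    ((hρ'.const_add 1).div (hx'.pow 2) (pow_ne_zero 2 hx))).add
    ((hasDerivAt_const x 2).div (hx'.pow 3) (pow_ne_zero 3 hx)) |>.congr_deriv ?_
  rw [F₃, exp_eq_ρ_add]
  simp only [Pi.add_apply, Pi.sub_apply, Pi.div_apply, Pi.pow_apply]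
  field_simp
  ring

theorem F_one : F 1 = 0 := by
  simp only [F, Λ, ρ_one]; norm_num

theorem F₁_one : F₁ 1 = 0 := by
  simp only [F₁, Λ, ρ_one, exp_eq_ρ_add 1]; norm_num

theorem F₂_one : F₂ 1 = 0 := by
  simp only [F₂, Λ, ρ_one]; norm_num
theorem log_one_add_c_div_ρ {x : ℝ} (hρ : 0 < ρ x) : log (1 + c / ρ x) = x - log (ρ x) := by
  rw [show 1 + c / ρ x = exp x / ρ x by rw [exp_eq_ρ_add]; field_simp,
    log_div (exp_pos x).ne' hρ.ne', log_exp]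

theorem Λ_ge {x : ℝ} (hx : 0 < x) (hρ : 0 < ρ x) :
    1 - x⁻¹ - (c / ρ x - (c / ρ x) ^ 2 / 2 + (c / ρ x) ^ 3 / 3) ≤ Λ x := by
  have hcρ : 0 ≤ c / ρ x := div_nonneg (by linarith [c_gt]) hρ.le
  have := log_one_add_le_cubic hcρ
  rw [log_one_add_c_div_ρ hρ] at this
  rw [Λ]
  linarith [one_sub_inv_le_log_of_pos hx]

noncomputable def G (v r : ℝ) : ℝ :=
  (r + c) * (v * (2 - 3 * v) + (2 * c ^ 2 - c ^ 3 / 3) * r⁻¹ ^ 3) + 2 * v ^ 3 * (1 + r - 3 * v)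

theorem G_le_F₃ {x : ℝ} (hx : 0 < x) (hρ : 0 < ρ x) : G x⁻¹ (ρ x) ≤ F₃ x := by
  have hΛ := Λ_ge hx hρ
  have hgap : 0 ≤ (c - c ^ 2 / 2) * (ρ x)⁻¹ ^ 2 := by
    have : 0 ≤ c - c ^ 2 / 2 := by nlinarith [c_gt, c_lt]
    positivity
  have hbr : x⁻¹ * (2 - 3 * x⁻¹) + (2 * c ^ 2 - c ^ 3 / 3) * (ρ x)⁻¹ ^ 3 ≤
      Λ x - 1 + 3 / x - 3 / x ^ 2 + c / ρ x + (c - c ^ 2) / ρ x ^ 2 + 2 * c ^ 2 / ρ x ^ 3 := by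
    have key : Λ x - 1 + 3 / x - 3 / x ^ 2 + c / ρ x + (c - c ^ 2) / ρ x ^ 2 + 2 * c ^ 2 / ρ x ^ 3
        - (x⁻¹ * (2 - 3 * x⁻¹) + (2 * c ^ 2 - c ^ 3 / 3) * (ρ x)⁻¹ ^ 3)
        = (Λ x - (1 - x⁻¹ - (c / ρ x - (c / ρ x) ^ 2 / 2 + (c / ρ x) ^ 3 / 3)))
          + (c - c ^ 2 / 2) * (ρ x)⁻¹ ^ 2 := by
      field_simp
      ring
    linarith
  have htail : 2 * (1 + ρ x) / x ^ 3 - 6 / x ^ 4 = 2 * x⁻¹ ^ 3 * (1 + ρ x - 3 * x⁻¹) := by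
    field_simp
    ring
  rw [G, F₃, exp_eq_ρ_add]
  have hρc : 0 ≤ ρ x + c := by linarith [c_gt]
  linarith [mul_le_mul_of_nonneg_left hbr hρc]

theorem G_nonneg_of_le_two_thirds {v r : ℝ} (hv0 : 0 ≤ v) (hv : v ≤ 2 / 3) (hr : 1 ≤ r) :
    0 ≤ G v r := by
  have hb : 0 ≤ 2 * c ^ 2 - c ^ 3 / 3 := by nlinarith [c_gt, c_lt]
  have h1 : 0 ≤ v * (2 - 3 * v) := by nlinarith
  have h2 : 0 ≤ 1 + r - 3 * v := by linarith
  have h3 : 0 ≤ r + c := by linarith [c_gt]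
  have h4 : 0 ≤ r⁻¹ := by positivity
  rw [G]
  positivity

theorem ρ_mul_two_div_sub_one_le {x : ℝ} (hx0 : 0 < x) (hx : x ≤ 3 / 2) :
    ρ x * (2 / x - 1) ≤ 5 / 4 := by
  have hexp : (2 - x) * exp x ≤ exp 1 := by
    have := add_one_le_exp (1 - x)
    rw [exp_sub, le_div_iff₀ (exp_pos x)] at this
    linarith
  rw [show ρ x * (2 / x - 1) = ((2 - x) * exp x - c * (2 - x)) / x by rw [ρ]; field_simp,
    div_le_iff₀ hx0]
  have he : exp 1 = 1 + c := by rw [c]; ring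
  nlinarith [mul_nonneg (sub_nonneg.2 c_gt.le) (sub_nonneg.2 hx), c_lt]

theorem quartic_nonneg {v : ℝ} (hv : 2 / 3 ≤ v) (hv1 : v ≤ 1) :
    0 ≤ 2.72 * (2 * v - 3 * v ^ 2) + 4 * v ^ 3 - 6 * v ^ 4 + 2.69 * (2 * v - 1) ^ 2
      + 3.7 * (2 * v - 1) ^ 3 := by
  nlinarith [mul_nonneg (sub_nonneg.2 hv) (sub_nonneg.2 hv1), sq_nonneg (v - 0.8),
    mul_nonneg (mul_nonneg (sub_nonneg.2 hv) (sub_nonneg.2 hv1)) (sub_nonneg.2 hv1)]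

theorem G_nonneg_of_two_thirds_le {v r : ℝ} (hv : 2 / 3 ≤ v) (hv1 : v ≤ 1) (hr : 1 ≤ r)
    (hrv : r * (2 * v - 1) ≤ 5 / 4) : 0 ≤ G v r := by
  have := c_gt
  have := c_lt
  have hr0 : 0 < r := by linarith
  set u := r⁻¹ with hu
  have hru : r * u = 1 := mul_inv_cancel₀ hr0.ne'
  have hw : 4 / 5 * (2 * v - 1) ≤ u := by
    rw [hu, ← one_div, le_div_iff₀ hr0]
    linarith
  have hb : 4.21 ≤ 2 * c ^ 2 - c ^ 3 / 3 := by nlinarith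
  have hlin : (1 + c) * (2 * v - 3 * v ^ 2) + 4 * v ^ 3 - 6 * v ^ 4
      ≤ (r + c) * (v * (2 - 3 * v)) + 2 * v ^ 3 * (1 + r - 3 * v) := by
    nlinarith [mul_nonneg (sub_nonneg.2 hr) (by nlinarith : 0 ≤ 2 * v - 3 * v ^ 2 + 2 * v ^ 3)]
  have hw0 : 0 ≤ 4 / 5 * (2 * v - 1) := by linarith
  have hcub : 2.69 * (2 * v - 1) ^ 2 + 3.7 * (2 * v - 1) ^ 3
      ≤ (2 * c ^ 2 - c ^ 3 / 3) * (u ^ 2 + c * u ^ 3) := by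
    calc 2.69 * (2 * v - 1) ^ 2 + 3.7 * (2 * v - 1) ^ 3
        ≤ 4.21 * ((4 / 5 * (2 * v - 1)) ^ 2 + 1.718 * (4 / 5 * (2 * v - 1)) ^ 3) := by
          nlinarith [pow_nonneg hw0 2, pow_nonneg hw0 3]
      _ ≤ 4.21 * (u ^ 2 + c * u ^ 3) := by gcongr
      _ ≤ (2 * c ^ 2 - c ^ 3 / 3) * (u ^ 2 + c * u ^ 3) := by gcongr
  have hG : G v r = (r + c) * (v * (2 - 3 * v)) + 2 * v ^ 3 * (1 + r - 3 * v)
      + (2 * c ^ 2 - c ^ 3 / 3) * (u ^ 2 + c * u ^ 3) := by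
    rw [G, ← hu]
    linear_combination (2 * c ^ 2 - c ^ 3 / 3) * u ^ 2 * hru
  rw [hG]
  have hc : 2.72 * (2 * v - 3 * v ^ 2) ≤ (1 + c) * (2 * v - 3 * v ^ 2) :=
    mul_le_mul_of_nonpos_right (by linarith) (by nlinarith)
  linarith [quartic_nonneg hv hv1]

theorem F₃_nonneg {x : ℝ} (hx : 1 ≤ x) : 0 ≤ F₃ x := by
  have hx0 : 0 < x := by linarith
  refine le_trans ?_ (G_le_F₃ hx0 (zero_lt_one.trans_le (one_le_ρ hx)))
  rcases le_total x (3 / 2) with h | h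
  · refine G_nonneg_of_two_thirds_le ?_ (inv_le_one_of_one_le₀ hx) (one_le_ρ hx) ?_
    · rw [le_inv_comm₀ (by norm_num) hx0]; linarith
    · simpa only [div_eq_mul_inv, one_mul] using ρ_mul_two_div_sub_one_le hx0 h
  · refine G_nonneg_of_le_two_thirds (by positivity) ?_ (one_le_ρ hx)
    rw [inv_le_comm₀ hx0 (by norm_num)]; linarith

theorem nonneg_of_hasDerivAt_of_one_le {f f' : ℝ → ℝ} (h1 : f 1 = 0)
    (hf : ∀ x, x ≠ 0 → ρ x ≠ 0 → HasDerivAt f (f' x) x) (hf' : ∀ x, 1 ≤ x → 0 ≤ f' x)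
    {x : ℝ} (hx : 1 ≤ x) : 0 ≤ f x :=
  h1 ▸ monotoneOn_Ici_of_hasDerivAt_nonneg
    (fun y hy => hf y (zero_lt_one.trans_le hy).ne' (zero_lt_one.trans_le (one_le_ρ hy)).ne')
    hf' self_mem_Ici hx hx

theorem F_nonneg {x : ℝ} (hx : 1 ≤ x) : 0 ≤ F x :=
  nonneg_of_hasDerivAt_of_one_le F_one (fun _ => hasDerivAt_F)
    (fun _ => nonneg_of_hasDerivAt_of_one_le F₁_one (fun _ => hasDerivAt_F₁)
      (fun _ => nonneg_of_hasDerivAt_of_one_le F₂_one (fun _ => hasDerivAt_F₂)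
        (fun _ => F₃_nonneg))) hx

theorem k_eq_F {x : ℝ} (hx : 0 < x) (hρ : 0 < ρ x) :
    let r := log (ρ x) + log x
    (1 + ρ x) * r - (exp r - 1) - ρ x * (1 - exp (-r)) = F x := by
  intro r
  rw [exp_neg, exp_add, exp_log hρ, exp_log hx, F, Λ]
  field_simp
  ring

end KAtR1

/-- For ρ ≥ 1 and r₁ = log ρ + log(log(ρ + e − 1)), we have k(r₁) ≥ 0. -/
theorem k_at_r1_nonneg (ρ : ℝ) (hρ : 1 ≤ ρ) :
    let r₁ := Real.log ρ + Real.log (Real.log (ρ + (Real.exp 1 - 1)))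
    (1 + ρ) * r₁ - (Real.exp r₁ - 1) - ρ * (1 - Real.exp (-r₁)) ≥ 0 := by
  have hpos : 0 < ρ + (exp 1 - 1) := by linarith [add_one_le_exp 1]
  have hL : 1 ≤ log (ρ + (exp 1 - 1)) := by
    rw [le_log_iff_exp_le hpos]; linarith
  have hρL : KAtR1.ρ (log (ρ + (exp 1 - 1))) = ρ := by
    rw [KAtR1.ρ, exp_log hpos, KAtR1.c]; ring
  have hk := KAtR1.k_eq_F (by linarith) (hρL ▸ (by linarith : (0 : ℝ) < ρ))
  rw [hρL] at hk
  exact (KAtR1.F_nonneg hL).trans hk.ge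
end

section
/- For ρ ≥ 1, the function k(r) = (1 + ρ)r − (e^r − 1) − ρ(1 − e^{−r}) satisfies k(r) ≥ 0 for all r with 0 ≤ r ≤ log ρ + log(log(ρ + e − 1)). -/
/-!
Since `∂ₜ k ρ t = (eᵗ - 1)(ρ - eᵗ) / eᵗ`, the function `k ρ` increases from `k ρ 0 = 0` up to
`log ρ` and decreases afterwards, so it suffices to show `k ρ r₁ ≥ 0`. With
`L ρ = log (ρ + e - 1)` we have `exp r₁ = ρ L ρ`, hence `k ρ r₁ = g ρ` for an explicit `g`, which
vanishes to third order at `ρ = 1`. So `g 1 = g' 1 = 0` and it remains to see `g'' ≥ 0` on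
`[1, ∞)`. Up to a positive factor `g''` is a polynomial in `e`, `ρ`, `L ρ`, and all its coefficients
become nonnegative after substituting `e = 5/2 + d`, `L ρ = 1 + w`, `ρ = 1 + e w + s`; here `s ≥ 0`
because `e L ρ ≤ ρ + e - 1`, the tangent line bound for `log` at `e`.
-/

open Real Set NNReal

noncomputable section

section Monotonicity

variable {D : Set ℝ} {f f' : ℝ → ℝ}

theorem monotoneOn_of_hasDerivAt_nonneg (hD : Convex ℝ D) (hf : ∀ x ∈ D, HasDerivAt f (f' x) x)
    (hf' : ∀ x ∈ interior D, 0 ≤ f' x) : MonotoneOn f D :=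
  monotoneOn_of_hasDerivWithinAt_nonneg hD (fun x hx => (hf x hx).continuousAt.continuousWithinAt)
    (fun x hx => (hf x (interior_subset hx)).hasDerivWithinAt) hf'

theorem antitoneOn_of_hasDerivAt_nonpos (hD : Convex ℝ D) (hf : ∀ x ∈ D, HasDerivAt f (f' x) x)
    (hf' : ∀ x ∈ interior D, f' x ≤ 0) : AntitoneOn f D :=
  antitoneOn_of_hasDerivWithinAt_nonpos hD (fun x hx => (hf x hx).continuousAt.continuousWithinAt)
    (fun x hx => (hf x (interior_subset hx)).hasDerivWithinAt) hf'

end Monotonicity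

namespace KNonneg

def k (ρ r : ℝ) : ℝ := (1 + ρ) * r - (exp r - 1) - ρ * (1 - exp (-r))

theorem k_zero (ρ : ℝ) : k ρ 0 = 0 := by simp [k]

theorem hasDerivAt_k (ρ r : ℝ) : HasDerivAt (k ρ) ((exp r - 1) * (ρ - exp r) / exp r) r := by
  have h := (((hasDerivAt_id r).const_mul (1 + ρ)).sub ((hasDerivAt_exp r).sub_const 1)).sub
    ((((hasDerivAt_neg r).exp).const_sub 1).const_mul ρ)
  refine h.congr_deriv ?_
  rw [exp_neg]
  field_simp
  ring

theorem monotoneOn_k {ρ : ℝ} (hρ : 0 < ρ) : MonotoneOn (k ρ) (Icc 0 (log ρ)) := by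
  refine monotoneOn_of_hasDerivAt_nonneg (convex_Icc _ _) (fun r _ => hasDerivAt_k ρ r) ?_
  intro r hr
  rw [interior_Icc] at hr
  obtain ⟨hr₀, hr⟩ := hr
  have h₁ : 1 ≤ exp r := one_le_exp hr₀.le
  have h₂ : exp r ≤ ρ := (lt_log_iff_exp_lt hρ).1 hr |>.le
  exact div_nonneg (mul_nonneg (by linarith) (by linarith)) (exp_pos r).le

theorem antitoneOn_k {ρ : ℝ} (hρ : 1 ≤ ρ) : AntitoneOn (k ρ) (Ici (log ρ)) := by
  refine antitoneOn_of_hasDerivAt_nonpos (convex_Ici _) (fun r _ => hasDerivAt_k ρ r) ?_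
  intro r hr
  rw [interior_Ici, mem_Ioi] at hr
  have h₁ : ρ ≤ exp r := ((log_lt_iff_lt_exp (by linarith)).1 hr).le
  exact div_nonpos_of_nonpos_of_nonneg (mul_nonpos_of_nonneg_of_nonpos (by linarith)
    (by linarith)) (exp_pos r).le

def L (ρ : ℝ) : ℝ := log (ρ + (exp 1 - 1))

def g (ρ : ℝ) : ℝ := (1 + ρ) * (log ρ + log (L ρ)) + 1 - ρ - ρ * L ρ + (L ρ)⁻¹

def g' (ρ : ℝ) : ℝ :=
  log ρ + log (L ρ) + ρ⁻¹ - L ρ - (L ρ - 1) * (ρ * L ρ - 1) / ((ρ + (exp 1 - 1)) * L ρ ^ 2)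

def numerator (E ρ ℓ : ℝ) : ℝ :=
  (ρ - 1) * (ρ + E - 1) ^ 2 * ℓ ^ 3 + 2 * ρ ^ 2 * (ρ + E - 1) * ℓ ^ 2
    - ρ ^ 2 * ℓ ^ 3 * (ρ + 2 * E - 2) + ρ ^ 2 * (ℓ + 2) - ρ ^ 2 * (1 + ρ) * ℓ * (ℓ + 1)

def g'' (ρ : ℝ) : ℝ :=
  numerator (exp 1) ρ (L ρ) / (ρ ^ 2 * (ρ + (exp 1 - 1)) ^ 2 * L ρ ^ 3)

theorem one_lt_add_exp_one_sub_one {ρ : ℝ} (hρ : 0 < ρ) : 1 < ρ + (exp 1 - 1) := by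
  linarith [add_one_lt_exp one_ne_zero]

theorem L_pos {ρ : ℝ} (hρ : 0 < ρ) : 0 < L ρ := log_pos (one_lt_add_exp_one_sub_one hρ)

theorem one_le_L {ρ : ℝ} (hρ : 1 ≤ ρ) : 1 ≤ L ρ := by
  rw [L, le_log_iff_exp_le (by linarith [exp_pos 1])]
  linarith

theorem exp_one_mul_L_le {ρ : ℝ} (hρ : 0 < ρ) : exp 1 * L ρ ≤ ρ + (exp 1 - 1) := by
  have h := add_one_le_exp (L ρ - 1)
  rw [sub_add_cancel, exp_sub, L, exp_log (zero_lt_one.trans (one_lt_add_exp_one_sub_one hρ)),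
    le_div_iff₀ (exp_pos 1)] at h
  rw [L, mul_comm]
  exact h

theorem hasDerivAt_L {ρ : ℝ} (hρ : 0 < ρ) : HasDerivAt L (ρ + (exp 1 - 1))⁻¹ ρ := by
  have h := ((hasDerivAt_id ρ).add_const (exp 1 - 1)).log
    (zero_lt_one.trans (one_lt_add_exp_one_sub_one hρ)).ne'
  rw [one_div] at h
  exact h

theorem hasDerivAt_g {ρ : ℝ} (hρ : 0 < ρ) : HasDerivAt g (g' ρ) ρ := by
  have ha := one_lt_add_exp_one_sub_one hρ
  have hL := L_pos hρ
  have hL' := hasDerivAt_L hρ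
  have h := ((((hasDerivAt_id ρ).const_add 1).mul ((hasDerivAt_log hρ.ne').add
    (hL'.log hL.ne'))).add_const 1 |>.sub (hasDerivAt_id ρ) |>.sub ((hasDerivAt_id ρ).mul hL')).add
    (hL'.inv hL.ne')
  refine h.congr_deriv ?_
  simp only [g', id, Pi.add_apply]
  field_simp
  ring

theorem hasDerivAt_g' {ρ : ℝ} (hρ : 0 < ρ) : HasDerivAt g' (g'' ρ) ρ := by
  have ha := one_lt_add_exp_one_sub_one hρ
  have hL := L_pos hρ
  have hL' := hasDerivAt_L hρ
  have hnum := (hL'.sub_const 1).mul (((hasDerivAt_id ρ).mul hL').sub_const 1)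
  have hden := ((hasDerivAt_id ρ).add_const (exp 1 - 1)).mul (hL'.pow 2)
  have hden_ne : (id ρ + (exp 1 - 1)) * L ρ ^ 2 ≠ 0 := by simp only [id]; positivity
  have h := ((((hasDerivAt_log hρ.ne').add (hL'.log hL.ne')).add
    ((hasDerivAt_id ρ).inv hρ.ne')).sub hL').sub (hnum.div hden hden_ne)
  refine h.congr_deriv ?_
  simp only [g'', numerator, id, Pi.mul_apply, Pi.pow_apply]
  field_simp
  ring

theorem numerator_nonneg {E ρ ℓ : ℝ} (hE : 5 / 2 ≤ E) (hℓ : 1 ≤ ℓ) (hρ : E * (ℓ - 1) ≤ ρ - 1) :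
    0 ≤ numerator E ρ ℓ := by
  obtain ⟨d, rfl⟩ : ∃ d : ℝ≥0, E = 5 / 2 + d :=
    ⟨(E - 5 / 2).toNNReal, by rw [Real.coe_toNNReal _ (by linarith)]; ring⟩
  obtain ⟨w, rfl⟩ : ∃ w : ℝ≥0, ℓ = 1 + w :=
    ⟨(ℓ - 1).toNNReal, by rw [Real.coe_toNNReal _ (by linarith)]; ring⟩
  obtain ⟨s, rfl⟩ : ∃ s : ℝ≥0, ρ = 1 + (5 / 2 + d) * w + s :=
    ⟨(ρ - 1 - (5 / 2 + d) * w).toNNReal, by rw [Real.coe_toNNReal _ (by linarith)]; ring⟩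
  unfold numerator
  ring_nf
  positivity

theorem g''_nonneg {ρ : ℝ} (hρ : 1 ≤ ρ) : 0 ≤ g'' ρ := by
  have hE : 5 / 2 ≤ exp 1 := by linarith [exp_one_gt_d9]
  have hL : exp 1 * (L ρ - 1) ≤ ρ - 1 := by linarith [exp_one_mul_L_le (by linarith : 0 < ρ)]
  have hL₀ := L_pos (by linarith : 0 < ρ)
  exact div_nonneg (numerator_nonneg hE (one_le_L hρ) hL) (by positivity)

theorem L_one : L 1 = 1 := by simp [L]

theorem g'_nonneg {ρ : ℝ} (hρ : 1 ≤ ρ) : 0 ≤ g' ρ := by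
  have hmono : MonotoneOn g' (Ici 1) :=
    monotoneOn_of_hasDerivAt_nonneg (convex_Ici 1)
      (fun x hx => hasDerivAt_g' (zero_lt_one.trans_le hx))
      (fun x hx => g''_nonneg (by rw [interior_Ici] at hx; exact hx.le))
  simpa [g', L_one] using hmono self_mem_Ici hρ hρ

theorem g_nonneg {ρ : ℝ} (hρ : 1 ≤ ρ) : 0 ≤ g ρ := by
  have hmono : MonotoneOn g (Ici 1) :=
    monotoneOn_of_hasDerivAt_nonneg (convex_Ici 1)
      (fun x hx => hasDerivAt_g (zero_lt_one.trans_le hx))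
      (fun x hx => g'_nonneg (by rw [interior_Ici] at hx; exact hx.le))
  simpa [g, L_one] using hmono self_mem_Ici hρ hρ

theorem k_log_add_log_L {ρ : ℝ} (hρ : 0 < ρ) : k ρ (log ρ + log (L ρ)) = g ρ := by
  have hL := L_pos hρ
  have hexp : exp (log ρ + log (L ρ)) = ρ * L ρ := by rw [exp_add, exp_log hρ, exp_log hL]
  rw [k, g, exp_neg, hexp]
  field_simp
  ring

end KNonneg

open KNonneg in
/-- For ρ ≥ 1, k(r) ≥ 0 for all 0 ≤ r ≤ log ρ + log(log(ρ + e − 1)). -/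
theorem k_nonneg_on_interval (ρ : ℝ) (hρ : 1 ≤ ρ) :
    ∀ r : ℝ, 0 ≤ r → r ≤ Real.log ρ + Real.log (Real.log (ρ + (Real.exp 1 - 1))) →
      (1 + ρ) * r - (Real.exp r - 1) - ρ * (1 - Real.exp (-r)) ≥ 0 := by
  intro r hr₀ hr₁
  have hρ₀ : 0 < ρ := by linarith
  show 0 ≤ k ρ r
  rcases le_total r (log ρ) with hr | hr
  · calc 0 = k ρ 0 := (k_zero ρ).symm
      _ ≤ k ρ r := monotoneOn_k hρ₀ ⟨le_rfl, log_nonneg hρ⟩ ⟨hr₀, hr⟩ hr₀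
  · calc 0 ≤ g ρ := g_nonneg hρ
      _ = k ρ (log ρ + log (L ρ)) := (k_log_add_log_L hρ₀).symm
      _ ≤ k ρ r := antitoneOn_k hρ hr (le_add_of_nonneg_right (log_nonneg (one_le_L hρ))) hr₁
end
end

section
/- Let l(ρ) = (ρ + 1)(log ρ + log(log(ρ + e − 1))) − ρ(log(ρ + e − 1) + 1) + (log(ρ + e − 1))^{−1} + 1. Then l(ρ) ≥ 0 for all ρ ≥ 1. -/
/-!
Write `l(ρ) = lGen ρ L` with `L = log (ρ + e - 1) ≥ 1`; in the paper's notation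
`lGen ρ L = k (log (ρ L))`. As `k` is concave with its maximum at `log ρ`, the map
`L ↦ lGen ρ L` is antitone for `ρ, L ≥ 1`, so `L` may be replaced by any upper bound. Since `l`
vanishes to third order at `ρ = 1`, the bound has to be sharp there: for `ρ < 7/2` we use
`L ≤ 1 + log (1 + (ρ - 1) / e)` together with `log y ≤ (y - y⁻¹) / 2`, and for `ρ ≥ 7/2` we use
`L ≤ log ρ + (e - 1) / ρ`. The remaining logarithms are bounded below by the Padé approximant
`3 (x² - 1) / (x² + 4x + 1)`, which leaves a rational inequality in `ρ`; after a substitution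
mapping the range of `ρ` onto `[0, ∞)`, its numerator has only positive coefficients.
-/

open Real

noncomputable def lGen (ρ L : ℝ) : ℝ :=
  (ρ + 1) * (log ρ + log L) - ρ * (L + 1) + L⁻¹ + 1

noncomputable def padeLog (x : ℝ) : ℝ :=
  3 * (x ^ 2 - 1) / (x ^ 2 + 4 * x + 1)

lemma Real.log_le_half_sub_inv {y : ℝ} (hy : 1 ≤ y) : log y ≤ (y - y⁻¹) / 2 := by
  have h := self_le_sinh_iff.2 (log_nonneg hy)
  rwa [sinh_eq, exp_neg, exp_log (by linarith)] at h

lemma padeLog_le_log {x : ℝ} (hx : 1 ≤ x) : padeLog x ≤ log x := by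
  have hderiv : ∀ t : ℝ, 0 < t →
      HasDerivAt (fun t => log t - padeLog t) ((t - 1) ^ 4 / (t * (t ^ 2 + 4 * t + 1) ^ 2)) t := by
    intro t ht
    have hnum := ((hasDerivAt_pow 2 t).sub_const 1).const_mul 3
    have hden := ((hasDerivAt_pow 2 t).add ((hasDerivAt_id t).const_mul 4)).add_const 1
    have hden0 : t ^ 2 + 4 * t + 1 ≠ 0 := by positivity
    refine ((hasDerivAt_log ht.ne').sub (hnum.div hden hden0)).congr_deriv ?_
    simp only [Pi.add_apply, id]
    field_simp
    ring
  have hmono : MonotoneOn (fun t => log t - padeLog t) (Set.Ici 1) := by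
    refine monotoneOn_of_hasDerivWithinAt_nonneg (convex_Ici 1)
      (f' := fun t => (t - 1) ^ 4 / (t * (t ^ 2 + 4 * t + 1) ^ 2)) (fun t ht => ?_)
      (fun t ht => ?_) (fun t ht => ?_) <;>
      simp only [interior_Ici, Set.mem_Ici, Set.mem_Ioi] at ht
    · exact (hderiv t (by linarith)).continuousAt.continuousWithinAt
    · exact (hderiv t (by linarith)).hasDerivWithinAt
    · have : 0 < t := by linarith
      positivity
  simpa [padeLog] using hmono Set.self_mem_Ici hx hx

lemma add_inv_le_add_inv {a b : ℝ} (ha : 1 ≤ a) (hab : a ≤ b) : a + a⁻¹ ≤ b + b⁻¹ := by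
  have hb : 0 < b := by linarith
  have : a⁻¹ - b⁻¹ ≤ b - a := by
    rw [inv_sub_inv (by linarith) hb.ne']
    exact div_le_self (by linarith) (by nlinarith)
  linarith

lemma lGen_le_lGen {ρ L U : ℝ} (hρ : 1 ≤ ρ) (hL : 1 ≤ L) (hLU : L ≤ U) :
    lGen ρ U ≤ lGen ρ L := by
  have hL0 : 0 < L := by linarith
  have hU0 : 0 < U := by linarith
  have hlog : log U - log L ≤ (U / L - L / U) / 2 := by
    rw [← log_div hU0.ne' hL0.ne']
    simpa using log_le_half_sub_inv ((one_le_div hL0).2 hLU)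
  have hrat : (ρ + 1) * ((U / L - L / U) / 2) ≤ ρ * (U - L) + (L⁻¹ - U⁻¹) := by
    have hfac : ρ * (U - L) + (L⁻¹ - U⁻¹) - (ρ + 1) * ((U / L - L / U) / 2)
        = (U - L) * ((ρ * U - 1) * (L - 1) + (ρ * L - 1) * (U - 1)) / (2 * U * L) := by
      field_simp
      ring
    have hpos : 0 ≤ (U - L) * ((ρ * U - 1) * (L - 1) + (ρ * L - 1) * (U - 1)) / (2 * U * L) := by
      apply div_nonneg _ (by positivity)
      apply mul_nonneg (by linarith)
      apply add_nonneg <;> apply mul_nonneg <;> nlinarith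
    linarith
  have := mul_le_mul_of_nonneg_left hlog (show 0 ≤ ρ + 1 by linarith)
  unfold lGen
  linarith

lemma one_le_log_add_exp_one_sub_one {ρ : ℝ} (hρ : 1 ≤ ρ) : 1 ≤ log (ρ + (exp 1 - 1)) := by
  rw [le_log_iff_exp_le (by linarith [exp_pos 1])]
  linarith

lemma log_add_exp_one_sub_one_le_one_add {ρ : ℝ} (hρ : 1 ≤ ρ) :
    let x := 10 * (ρ - 1) / 27
    log (ρ + (exp 1 - 1)) ≤ 1 + x * (2 + x) / (2 * (1 + x)) := by
  intro x
  have hx : 0 ≤ x := by positivity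
  have he : 27 / 10 < exp 1 := by linarith [exp_one_gt_d9]
  have hsplit : log (ρ + (exp 1 - 1)) ≤ 1 + log (1 + x) := by
    have hle : ρ + (exp 1 - 1) ≤ exp 1 * (1 + x) := by
      simp only [x]
      nlinarith
    calc log (ρ + (exp 1 - 1)) ≤ log (exp 1 * (1 + x)) := log_le_log (by linarith) hle
      _ = 1 + log (1 + x) := by rw [log_mul (exp_pos 1).ne' (by linarith), log_exp]
  have htrap := log_le_half_sub_inv (show 1 ≤ 1 + x by linarith)
  have hform : (1 + x - (1 + x)⁻¹) / 2 = x * (2 + x) / (2 * (1 + x)) := by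
    field_simp
    ring
  linarith

lemma log_add_exp_one_sub_one_le_log_add {ρ : ℝ} (hρ : 0 < ρ) :
    log (ρ + (exp 1 - 1)) ≤ log ρ + 7 / 4 / ρ := by
  have he : exp 1 - 1 ≤ 7 / 4 := by linarith [exp_one_lt_d9]
  have hpos : 0 < ρ + (exp 1 - 1) := by linarith [exp_one_gt_d9]
  have h := log_le_sub_one_of_pos (div_pos hpos hρ)
  rw [log_div hpos.ne' hρ.ne'] at h
  have : (ρ + (exp 1 - 1)) / ρ - 1 ≤ 7 / 4 / ρ := by
    rw [div_sub_one hρ.ne']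
    gcongr
    linarith
  linarith

lemma rational_bound_nonneg_of_lt_seven_halves {ρ : ℝ} (hρ : 1 ≤ ρ) (hρ' : ρ < 7 / 2) :
    let x := 10 * (ρ - 1) / 27
    let V := 1 + x * (2 + x) / (2 * (1 + x))
    0 ≤ (ρ + 1) * (padeLog ρ + padeLog V) - ρ * (V + 1) + V⁻¹ + 1 := by
  intro x V
  obtain ⟨s, hs, rfl⟩ : ∃ s, 0 ≤ s ∧ ρ = 1 + 5 * s / (2 * (1 + s)) := by
    obtain ⟨s, hs, hsρ⟩ : ∃ s, 0 ≤ s ∧ s * (7 - 2 * ρ) = 2 * (ρ - 1) :=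
      ⟨2 * (ρ - 1) / (7 - 2 * ρ), by apply div_nonneg <;> linarith,
        div_mul_cancel₀ _ (by linarith)⟩
    refine ⟨s, hs, ?_⟩
    have : 1 + s ≠ 0 := by linarith
    field_simp
    linarith
  simp only [V, x, padeLog, add_sub_cancel_left]
  field_simp
  ring_nf
  positivity

lemma rational_bound_nonneg_of_seven_halves_le {ρ : ℝ} (hρ : 7 / 2 ≤ ρ) :
    let u := padeLog ρ + 7 / 4 / ρ
    0 ≤ (ρ + 1) * padeLog u + u + u⁻¹ - 7 / 4 * (ρ + 1) / ρ - ρ + 1 := by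
  intro u
  obtain ⟨y, hy, rfl⟩ : ∃ y, 0 ≤ y ∧ ρ = 7 / 2 + y := ⟨ρ - 7 / 2, by linarith, by ring⟩
  simp only [padeLog, u]
  -- makes the numerator of `u`, which becomes a denominator, visibly positive
  rw [show (7 / 2 + y) ^ 2 - 1 = (5 / 2 + y) * (9 / 2 + y) by ring]
  field_simp
  ring_nf
  positivity

lemma l_nonneg_of_lt_seven_halves {ρ : ℝ} (hρ : 1 ≤ ρ) (hρ' : ρ < 7 / 2) :
    0 ≤ lGen ρ (log (ρ + (exp 1 - 1))) := by
  set x := 10 * (ρ - 1) / 27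
  set V := 1 + x * (2 + x) / (2 * (1 + x))
  have hL := one_le_log_add_exp_one_sub_one hρ
  have hLV : log (ρ + (exp 1 - 1)) ≤ V := log_add_exp_one_sub_one_le_one_add hρ
  have hV : 1 ≤ V := hL.trans hLV
  calc 0 ≤ (ρ + 1) * (padeLog ρ + padeLog V) - ρ * (V + 1) + V⁻¹ + 1 :=
        rational_bound_nonneg_of_lt_seven_halves hρ hρ'
    _ ≤ lGen ρ V := by
        unfold lGen
        gcongr
        · exact padeLog_le_log hρ
        · exact padeLog_le_log hV
    _ ≤ lGen ρ (log (ρ + (exp 1 - 1))) := lGen_le_lGen hρ hL hLV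

lemma l_nonneg_of_seven_halves_le {ρ : ℝ} (hρ : 7 / 2 ≤ ρ) :
    0 ≤ lGen ρ (log (ρ + (exp 1 - 1))) := by
  have hρ0 : 0 < ρ := by linarith
  set U := log ρ + 7 / 4 / ρ
  set u := padeLog ρ + 7 / 4 / ρ
  have hL := one_le_log_add_exp_one_sub_one (show 1 ≤ ρ by linarith)
  have hLU : log (ρ + (exp 1 - 1)) ≤ U := log_add_exp_one_sub_one_le_log_add hρ0
  have hu : 1 ≤ u := by
    have : 1 ≤ padeLog ρ := by
      rw [padeLog, le_div_iff₀ (by positivity)]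
      nlinarith
    have : 0 ≤ 7 / 4 / ρ := by positivity
    linarith
  have huU : u ≤ U := by
    simp only [u, U]
    linarith [padeLog_le_log (show 1 ≤ ρ by linarith)]
  calc 0 ≤ (ρ + 1) * padeLog u + u + u⁻¹ - 7 / 4 * (ρ + 1) / ρ - ρ + 1 :=
        rational_bound_nonneg_of_seven_halves_le hρ
    _ ≤ (ρ + 1) * log U + U + U⁻¹ - 7 / 4 * (ρ + 1) / ρ - ρ + 1 := by
        have h1 : padeLog u ≤ log U :=
          (padeLog_le_log hu).trans (log_le_log (by linarith) huU)
        have := mul_le_mul_of_nonneg_left h1 (show 0 ≤ ρ + 1 by linarith)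
        linarith [add_inv_le_add_inv hu huU]
    _ = lGen ρ U := by
        unfold lGen
        simp only [U]
        field_simp
        ring
    _ ≤ lGen ρ (log (ρ + (exp 1 - 1))) := lGen_le_lGen (by linarith) hL hLU

/-- l(ρ) ≥ 0 for all ρ ≥ 1. -/
theorem l_nonneg (ρ : ℝ) (hρ : 1 ≤ ρ) :
    (ρ + 1) * (Real.log ρ + Real.log (Real.log (ρ + (Real.exp 1 - 1))))
      - ρ * (Real.log (ρ + (Real.exp 1 - 1)) + 1)
      + (Real.log (ρ + (Real.exp 1 - 1)))⁻¹ + 1 ≥ 0 := by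
  show 0 ≤ lGen ρ (log (ρ + (exp 1 - 1)))
  rcases lt_or_ge ρ (7 / 2) with h | h
  · exact l_nonneg_of_lt_seven_halves hρ h
  · exact l_nonneg_of_seven_halves_le h
end
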